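/- Fix n ≥ 1. The Houghton group H_n is dis-co-Hopfian: there exists an injective group homomorphism η : H_n → H_n such that the intersection over all k ≥ 1 of the iterated images η^k(H_n) is the trivial subgroup, i.e. ⋂_{k=1}^{∞} η^k(H_n) = {1}. -/

import Mathlib

/-- A permutation `σ` of `Fin n × ℕ` is an *eventual translation* if there are integers
`m₁, …, m_n` and a finite set `F ⊆ Fin n × ℕ` such that `σ (i, k) = (i, k + mᵢ)` for all
`(i, k) ∉ F`. -/
def IsEventualTranslation {n : ℕ} (σ : Equiv.Perm (Fin n × ℕ)) : Prop :=
  ∃ (m : Fin n → ℤ) (F : Finset (Fin n × ℕ)),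
    ∀ p : Fin n × ℕ, p ∉ F →
      (σ p).1 = p.1 ∧ ((σ p).2 : ℤ) = (p.2 : ℤ) + m p.1

/-- The Houghton group `H_n`: the subgroup of `Equiv.Perm (Fin n × ℕ)` consisting of the
eventual translations. -/
def HoughtonGroup (n : ℕ) : Subgroup (Equiv.Perm (Fin n × ℕ)) where
  carrier := {σ | IsEventualTranslation σ}
  one_mem' := ⟨0, ∅, fun p _ => by simp⟩
  mul_mem' := by
    rintro a b ⟨m, F, hF⟩ ⟨m', F', hF'⟩
    refine ⟨m + m', F' ∪ F.preimage b b.injective.injOn, fun p hp => ?_⟩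
    simp only [Finset.mem_union, Finset.mem_preimage, not_or] at hp
    obtain ⟨hp1, hp2⟩ := hp
    obtain ⟨hb1, hb2⟩ := hF' p hp1
    obtain ⟨ha1, ha2⟩ := hF (b p) hp2
    refine ⟨by simp [Equiv.Perm.mul_apply, ha1, hb1], ?_⟩
    simp only [Equiv.Perm.mul_apply, Pi.add_apply]
    rw [ha2, hb2, hb1]
    ring
  inv_mem' := by
    rintro a ⟨m, F, hF⟩
    refine ⟨-m, F.image a, fun p hp => ?_⟩
    have hmem : a⁻¹ p ∉ F := by
      intro h
      exact hp (Finset.mem_image.mpr ⟨a⁻¹ p, h, a.apply_symm_apply p⟩)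
    obtain ⟨h1, h2⟩ := hF (a⁻¹ p) hmem
    rw [show a (a⁻¹ p) = p from a.apply_symm_apply p] at h1 h2
    refine ⟨h1.symm, ?_⟩
    rw [← h1] at h2
    simp only [Pi.neg_apply]
    omega

/-!
Let `η` conjugate a permutation by the shift `(i, k) ↦ (i, k + 1)`, acting as the identity on
the points `(i, 0)`; it preserves eventual translations and is injective. Every element of the
image of `η ^ k` fixes all points `(i, j)` with `j < k`, so an element lying in every image
fixes every point.
-/

theorem Equiv.Perm.viaEmbedding_apply_eq_self {α β : Type*} {e : α ↪ β} {σ : Equiv.Perm α}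
    {x : β} (h : ∀ a, e a = x → σ a = a) : σ.viaEmbedding e x = x := by
  by_cases hx : x ∈ Set.range e
  · obtain ⟨a, rfl⟩ := hx
    rw [Equiv.Perm.viaEmbedding_apply, h a rfl]
  · exact Equiv.Perm.viaEmbedding_apply_of_notMem σ e x hx

namespace HoughtonGroup

variable {n : ℕ}

def shift (n : ℕ) : Fin n × ℕ ↪ Fin n × ℕ :=
  ⟨Prod.map id Nat.succ, Function.injective_id.prodMap Nat.succ_injective⟩

@[simp]
theorem shift_apply (p : Fin n × ℕ) : shift n p = (p.1, p.2 + 1) := rfl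

theorem exists_shift_eq {p : Fin n × ℕ} (hp : p.2 ≠ 0) : ∃ q, shift n q = p :=
  ⟨(p.1, p.2 - 1), Prod.ext rfl (Nat.sub_add_cancel (Nat.one_le_iff_ne_zero.mpr hp))⟩

/-- Conjugating by the shift keeps the translation lengths; the new exceptional set is the
shifted old one together with the column `k = 0`. -/
theorem viaEmbedding_shift_mem {σ : Equiv.Perm (Fin n × ℕ)} (hσ : σ ∈ HoughtonGroup n) :
    σ.viaEmbedding (shift n) ∈ HoughtonGroup n := by
  obtain ⟨m, F, hF⟩ := hσ
  refine ⟨m, F.map (shift n) ∪ Finset.univ ×ˢ {0}, fun p hp => ?_⟩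
  simp only [Finset.mem_union, Finset.mem_map, Finset.mem_product, Finset.mem_univ,
    Finset.mem_singleton, true_and, not_or, not_exists, not_and] at hp
  obtain ⟨hpF, hp0⟩ := hp
  obtain ⟨q, rfl⟩ := exists_shift_eq hp0
  obtain ⟨h1, h2⟩ := hF q fun hq => hpF q hq rfl
  rw [Equiv.Perm.viaEmbedding_apply, shift_apply, shift_apply]
  exact ⟨h1, by push_cast; omega⟩

noncomputable def shiftEnd (n : ℕ) : Monoid.End (HoughtonGroup n) :=
  ((Equiv.Perm.viaEmbeddingHom (shift n)).comp (HoughtonGroup n).subtype).codRestrict _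
    fun σ => viaEmbedding_shift_mem σ.2

theorem shiftEnd_injective : Function.Injective (shiftEnd n) := fun _ _ h =>
  Subtype.ext (Equiv.Perm.viaEmbeddingHom_injective _ (congrArg Subtype.val h))

theorem shiftEnd_pow_apply_eq_self (k : ℕ) (σ : HoughtonGroup n) {p : Fin n × ℕ}
    (hp : p.2 < k) : ((shiftEnd n ^ k) σ : Equiv.Perm (Fin n × ℕ)) p = p := by
  induction k generalizing p with
  | zero => omega
  | succ k ih =>
    rw [Monoid.End.coe_pow, Function.iterate_succ_apply']
    refine Equiv.Perm.viaEmbedding_apply_eq_self fun q hq => ih ?_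
    rw [← hq, shift_apply] at hp
    omega

end HoughtonGroup

theorem houghton_disCoHopfian_general (n : ℕ) :
    ∃ η : Monoid.End (HoughtonGroup n),
      Function.Injective η ∧
      (⨅ k : ℕ, MonoidHom.range ((η ^ (k + 1) : Monoid.End (HoughtonGroup n)) :
        HoughtonGroup n →* HoughtonGroup n)) = ⊥ := by
  refine ⟨HoughtonGroup.shiftEnd n, HoughtonGroup.shiftEnd_injective, ?_⟩
  refine (Subgroup.eq_bot_iff_forall _).mpr fun σ hσ => Subtype.ext (Equiv.ext fun p => ?_)
  obtain ⟨τ, rfl⟩ := Subgroup.mem_iInf.mp hσ p.2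
  exact HoughtonGroup.shiftEnd_pow_apply_eq_self _ τ (Nat.lt_succ_self _)

/-- The Houghton group `H_n` (`n ≥ 1`) is dis-co-Hopfian: it admits an injective group
endomorphism `η` such that the intersection of the iterated images `η^k(H_n)`, `k ≥ 1`,
is the trivial subgroup. -/
theorem houghton_disCoHopfian (n : ℕ) (hn : 1 ≤ n) :
    ∃ η : Monoid.End (HoughtonGroup n),
      Function.Injective η ∧
      (⨅ k : ℕ, MonoidHom.range ((η ^ (k + 1) : Monoid.End (HoughtonGroup n)) :
        HoughtonGroup n →* HoughtonGroup n)) = ⊥ :=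
  houghton_disCoHopfian_general n
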